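/- arXiv:1402.1921 — 4 statements merged into one kernel-verified Lean document; each statement's English description precedes it below -/
import Mathlib

section
/- Strict-maximum loss comparison (from the proof of Theorem 1): Let q be a strictly positive distribution over Y whose value at t is a strict maximum, i.e. q t > q y for all y ≠ t. Then for every label y* ≠ t: ℓ_H(q,y*) > 1, ℓ_H(q,t) < 1, and for every α ∈ [0,1], ℓ_α(q,y*) − ℓ_α(q,t) > 0. -/
open Real

/-- The maximum of `p` over all labels different from `y`
(as a supremum, which for a finite nonempty label set equals the maximum). -/
noncomputable def maxNe {Y : Type*} (p : Y → ℝ) (y : Y) : ℝ :=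
  sSup {x : ℝ | ∃ y' : Y, y' ≠ y ∧ p y' = x}

/-- The multiclass hinge loss of a (strictly positive) distribution `p` at label `y`. -/
noncomputable def hingeLoss {Y : Type*} (p : Y → ℝ) (y : Y) : ℝ :=
  max 0 (1 - Real.log (p y / maxNe p y))

/-- The log loss of a (strictly positive) distribution `p` at label `y`. -/
noncomputable def logLoss {Y : Type*} (p : Y → ℝ) (y : Y) : ℝ :=
  - Real.log (p y)

/-- The hybrid loss with mixture parameter `α`. -/
noncomputable def hybridLoss {Y : Type*} (α : ℝ) (p : Y → ℝ) (y : Y) : ℝ :=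
  α * logLoss p y + (1 - α) * hingeLoss p y

/-- The conditional risk `L_α(p, D) = ∑ y, D y * ℓ_α(p, y)`. -/
noncomputable def condRisk {Y : Type*} [Fintype Y] (α : ℝ) (p D : Y → ℝ) : ℝ :=
  ∑ y, D y * hybridLoss α p y

/-- `D` is a distribution over `Y`. -/
def IsDist {Y : Type*} [Fintype Y] (D : Y → ℝ) : Prop :=
  (∀ y, 0 ≤ D y) ∧ ∑ y, D y = 1

/-- `p` is a strictly positive distribution over `Y`. -/
def IsPosDist {Y : Type*} [Fintype Y] (p : Y → ℝ) : Prop :=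
  (∀ y, 0 < p y) ∧ ∑ y, p y = 1

/-- Strict-maximum loss comparison from the proof of Theorem 1. -/
theorem strict_max_loss_comparison {Y : Type*} [Fintype Y]
    (hcard : 1 < Fintype.card Y)
    (q : Y → ℝ) (hq : IsPosDist q)
    (t : Y) (hmax : ∀ y, y ≠ t → q y < q t)
    (ystar : Y) (hne : ystar ≠ t) :
    1 < hingeLoss q ystar ∧ hingeLoss q t < 1 ∧
      ∀ α ∈ Set.Icc (0 : ℝ) 1, 0 < hybridLoss α q ystar - hybridLoss α q t := by

  obtain ⟨hpos, hsum⟩ := hq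
  -- maxNe q ystar = q t
  have hSne : ∀ y : Y, {x : ℝ | ∃ y' : Y, y' ≠ y ∧ q y' = x}.Nonempty := by
    intro y
    obtain ⟨y', hy'⟩ := Fintype.exists_ne_of_one_lt_card hcard y
    exact ⟨q y', y', hy', rfl⟩
  have hSfin : ∀ y : Y, {x : ℝ | ∃ y' : Y, y' ≠ y ∧ q y' = x}.Finite := by
    intro y
    have : {x : ℝ | ∃ y' : Y, y' ≠ y ∧ q y' = x} ⊆ Set.range q := by
      rintro x ⟨y', _, rfl⟩; exact ⟨y', rfl⟩
    exact Set.Finite.subset (Set.finite_range q) this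
  have h1 : maxNe q ystar = q t := by
    apply le_antisymm
    · apply csSup_le (hSne ystar)
      rintro x ⟨y', hy', rfl⟩
      by_cases h : y' = t
      · subst h; exact le_refl _
      · exact (hmax y' h).le
    · exact le_csSup ((hSfin ystar).bddAbove) ⟨t, Ne.symm hne, rfl⟩
  have hm := (hSne t).csSup_mem (hSfin t)
  obtain ⟨y0, hy0, hy0eq⟩ := hm
  have hmpos : 0 < maxNe q t := by unfold maxNe; rw [← hy0eq]; exact hpos y0
  have hmlt : maxNe q t < q t := by unfold maxNe; rw [← hy0eq]; exact hmax y0 hy0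
  -- hinge at ystar
  have hlog1 : Real.log (q ystar / maxNe q ystar) < 0 := by
    rw [h1]
    apply Real.log_neg
    · exact div_pos (hpos ystar) (hpos t)
    · rw [div_lt_one (hpos t)]; exact hmax ystar hne
  have hH1 : 1 < hingeLoss q ystar := by
    unfold hingeLoss
    rw [max_eq_right (by linarith)]
    linarith
  -- hinge at t
  have hlog2 : 0 < Real.log (q t / maxNe q t) := by
    apply Real.log_pos
    rw [lt_div_iff₀ hmpos]; linarith
  have hH2 : hingeLoss q t < 1 := by
    unfold hingeLoss
    rcases max_cases (0:ℝ) (1 - Real.log (q t / maxNe q t)) with ⟨h, _⟩ | ⟨h, _⟩ <;>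
      rw [h] <;> linarith
  refine ⟨hH1, hH2, ?_⟩
  intro α hα
  obtain ⟨h0, h1'⟩ := hα
  have hLd : 0 < logLoss q ystar - logLoss q t := by
    unfold logLoss
    have := Real.log_lt_log (hpos ystar) (hmax ystar hne)
    linarith
  have hHd : 0 < hingeLoss q ystar - hingeLoss q t := by linarith
  unfold hybridLoss
  nlinarith [mul_nonneg h0 hLd.le, mul_nonneg (by linarith : (0:ℝ) ≤ 1-α) hHd.le]
end

section
/- Risk reduction by swapping (case 1 of the proof of Theorem 1): Let D be a distribution over Y, let t ≠ y* be labels with D t > D y*, and let p be a strictly positive distribution over Y whose value at y* is a strict maximum, i.e. p y* > p y for all y ≠ y*. Let q be the distribution obtained by swapping the values of p at t and y* (q t = p y*, q y* = p t, q y = p y otherwise). Then for every α ∈ [0,1], L_α(q,D) < L_α(p,D). -/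
open Real

section Aux

variable {Y : Type*} [Fintype Y]

lemma maxNe_setOf (p : Y → ℝ) (y : Y) :
    {x : ℝ | ∃ y' : Y, y' ≠ y ∧ p y' = x} = p '' {y' | y' ≠ y} := by
  ext x; simp [Set.mem_image, and_comm]

lemma maxNe_set_finite (p : Y → ℝ) (y : Y) :
    {x : ℝ | ∃ y' : Y, y' ≠ y ∧ p y' = x}.Finite := by
  rw [maxNe_setOf]; exact (Set.toFinite _).image p

lemma maxNe_set_nonempty (hcard : 1 < Fintype.card Y) (p : Y → ℝ) (y : Y) :
    {x : ℝ | ∃ y' : Y, y' ≠ y ∧ p y' = x}.Nonempty := by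
  obtain ⟨y', hy'⟩ := Fintype.exists_ne_of_one_lt_card hcard y
  exact ⟨p y', y', hy', rfl⟩

lemma maxNe_mem (hcard : 1 < Fintype.card Y) (p : Y → ℝ) (y : Y) :
    maxNe p y ∈ {x : ℝ | ∃ y' : Y, y' ≠ y ∧ p y' = x} :=
  (maxNe_set_nonempty hcard p y).csSup_mem (maxNe_set_finite p y)

lemma le_maxNe (p : Y → ℝ) {y y' : Y} (h : y' ≠ y) : p y' ≤ maxNe p y :=
  le_csSup (maxNe_set_finite p y).bddAbove ⟨y', h, rfl⟩

end Aux

/-- Risk reduction by swapping (case 1 of the proof of Theorem 1). -/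
theorem risk_reduction_by_swap {Y : Type*} [Fintype Y]
    (hcard : 1 < Fintype.card Y)
    (D : Y → ℝ) (hD : IsDist D)
    (t ystar : Y) (hne : t ≠ ystar) (hDt : D ystar < D t)
    (p : Y → ℝ) (hp : IsPosDist p)
    (hmax : ∀ y, y ≠ ystar → p y < p ystar)
    (q : Y → ℝ) (hqt : q t = p ystar) (hqstar : q ystar = p t)
    (hq : ∀ y, y ≠ t → y ≠ ystar → q y = p y)
    (α : ℝ) (hα : α ∈ Set.Icc (0 : ℝ) 1) :
    condRisk α q D < condRisk α p D := by
  obtain ⟨hppos, -⟩ := hp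
  -- q is p composed with the swap, at the level of value sets
  have hsetq : ∀ y : Y, y ≠ t → y ≠ ystar →
      {x : ℝ | ∃ y' : Y, y' ≠ y ∧ q y' = x} = {x : ℝ | ∃ y' : Y, y' ≠ y ∧ p y' = x} := by
    intro y hyt hys
    ext x
    constructor
    · rintro ⟨y', hy', rfl⟩
      by_cases h1 : y' = t
      · exact ⟨ystar, Ne.symm hys, by rw [h1] at *; rw [hqt]⟩
      · by_cases h2 : y' = ystar
        · exact ⟨t, Ne.symm hyt, by rw [h2] at *; rw [hqstar]⟩
        · exact ⟨y', hy', (hq y' h1 h2).symm⟩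
    · rintro ⟨y', hy', rfl⟩
      by_cases h1 : y' = t
      · exact ⟨ystar, Ne.symm hys, by rw [h1] at *; rw [hqstar]⟩
      · by_cases h2 : y' = ystar
        · exact ⟨t, Ne.symm hyt, by rw [h2] at *; rw [hqt]⟩
        · exact ⟨y', hy', hq y' h1 h2⟩
  have hsett : {x : ℝ | ∃ y' : Y, y' ≠ t ∧ q y' = x}
      = {x : ℝ | ∃ y' : Y, y' ≠ ystar ∧ p y' = x} := by
    ext x
    constructor
    · rintro ⟨y', hy', rfl⟩
      by_cases h2 : y' = ystar
      · exact ⟨t, hne, by rw [h2] at *; rw [hqstar]⟩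
      · exact ⟨y', h2, (hq y' hy' h2).symm⟩
    · rintro ⟨y', hy', rfl⟩
      by_cases h1 : y' = t
      · exact ⟨ystar, Ne.symm hne, by rw [h1] at *; rw [hqstar]⟩
      · exact ⟨y', h1, hq y' h1 hy'⟩
  have hsets : {x : ℝ | ∃ y' : Y, y' ≠ ystar ∧ q y' = x}
      = {x : ℝ | ∃ y' : Y, y' ≠ t ∧ p y' = x} := by
    ext x
    constructor
    · rintro ⟨y', hy', rfl⟩
      by_cases h1 : y' = t
      · exact ⟨ystar, Ne.symm hne, by rw [h1] at *; rw [hqt]⟩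
      · exact ⟨y', h1, (hq y' h1 hy').symm⟩
    · rintro ⟨y', hy', rfl⟩
      by_cases h2 : y' = ystar
      · exact ⟨t, hne, by rw [h2] at *; rw [hqt]⟩
      · exact ⟨y', h2, hq y' hy' h2⟩
  -- hybrid losses relate by the swap
  have hhyb : ∀ y : Y, y ≠ t → y ≠ ystar → hybridLoss α q y = hybridLoss α p y := by
    intro y h1 h2
    unfold hybridLoss logLoss hingeLoss maxNe
    rw [hq y h1 h2, hsetq y h1 h2]
  have hhybt : hybridLoss α q t = hybridLoss α p ystar := by
    unfold hybridLoss logLoss hingeLoss maxNe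
    rw [hqt, hsett]
  have hhybs : hybridLoss α q ystar = hybridLoss α p t := by
    unfold hybridLoss logLoss hingeLoss maxNe
    rw [hqstar, hsets]
  -- key strict inequality: hybridLoss α p ystar < hybridLoss α p t
  have hptlt : p t < p ystar := hmax t hne
  have hlog : logLoss p ystar < logLoss p t := by
    unfold logLoss
    have := Real.log_lt_log (hppos t) hptlt
    linarith
  have hmaxys_lt : maxNe p ystar < p ystar := by
    obtain ⟨y', hy', hval⟩ := maxNe_mem hcard p ystar
    rw [← hval]; exact hmax y' hy'
  have hmaxys_pos : 0 < maxNe p ystar := by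
    obtain ⟨y', _, hval⟩ := maxNe_mem hcard p ystar
    rw [← hval]; exact hppos y'
  have hmaxt_ge : p ystar ≤ maxNe p t := le_maxNe p (Ne.symm hne)
  have hmaxt_pos : 0 < maxNe p t := lt_of_lt_of_le (hppos ystar) hmaxt_ge
  have hhingeys : hingeLoss p ystar < 1 := by
    unfold hingeLoss
    have hratio : 1 < p ystar / maxNe p ystar :=
      (one_lt_div hmaxys_pos).2 hmaxys_lt
    have := Real.log_pos hratio
    have h1 : 1 - Real.log (p ystar / maxNe p ystar) < 1 := by linarith
    exact max_lt one_pos h1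
  have hhinget : 1 < hingeLoss p t := by
    unfold hingeLoss
    have hratio : p t / maxNe p t < 1 := by
      rw [div_lt_one hmaxt_pos]; exact lt_of_lt_of_le hptlt hmaxt_ge
    have := Real.log_neg (div_pos (hppos t) hmaxt_pos) hratio
    have h1 : 1 < 1 - Real.log (p t / maxNe p t) := by linarith
    exact lt_of_lt_of_le h1 (le_max_right _ _)
  have hhinge : hingeLoss p ystar < hingeLoss p t := hhingeys.trans hhinget
  obtain ⟨hα0, hα1⟩ := hα
  have hkey : hybridLoss α p ystar < hybridLoss α p t := by
    unfold hybridLoss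
    rcases eq_or_lt_of_le hα0 with h | h
    · rw [← h]; simpa using hhinge
    · have h1 : α * logLoss p ystar < α * logLoss p t :=
        mul_lt_mul_of_pos_left hlog h
      have h2 : (1 - α) * hingeLoss p ystar ≤ (1 - α) * hingeLoss p t :=
        mul_le_mul_of_nonneg_left hhinge.le (by linarith)
      linarith
  -- sum up the differences
  have hsum : condRisk α q D - condRisk α p D
      = (D t - D ystar) * (hybridLoss α p ystar - hybridLoss α p t) := by
    unfold condRisk
    rw [← Finset.sum_sub_distrib]
    rw [Fintype.sum_eq_add (f := fun y => D y * hybridLoss α q y - D y * hybridLoss α p y)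
      t ystar hne ?_]
    · rw [hhybt, hhybs]; ring
    · rintro x ⟨hx1, hx2⟩
      simp only [hhyb x hx1 hx2, sub_self]
  have : condRisk α q D - condRisk α p D < 0 := by
    rw [hsum]
    exact mul_neg_of_pos_of_neg (by linarith) (by linarith)
  linarith
end

section
/- Perturbation bound at labels other than t and y* (inequality (10) in the proof of Theorem 1): In the perturbation setup, for every label y ∉ {t, y*}: ℓ_L(p,y) = ℓ_L(q,y), and ℓ_H(p,y) − ℓ_H(q,y) = log(p t / (p t + ε)) > −ε / (p t). Consequently, for every α ∈ [0,1], ℓ_α(p,y) − ℓ_α(q,y) ≥ −ε·(1−α)/(p t), with strict inequality when α < 1. -/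
open Real

/-!
Away from `t` and `y*` the perturbation leaves `p y` unchanged, so the log loss does not move,
while the largest competing score rises from `p t` (attained at `t`) to `p t + ε` (attained
at `y*`). The hinge loss is in its linear regime on both sides, so it drops by exactly
`log ((p t + ε) / p t)`, and `log x < x - 1` bounds this drop by `ε / p t`.
-/

section Losses

variable {Y : Type*} {p q : Y → ℝ} {y : Y}

theorem maxNe_eq_of_le {a : Y} (hay : a ≠ y) (hle : ∀ y', y' ≠ y → p y' ≤ p a) :
    maxNe p y = p a :=
  IsGreatest.csSup_eq ⟨⟨a, hay, rfl⟩, by rintro _ ⟨y', hy', rfl⟩; exact hle y' hy'⟩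

theorem hingeLoss_eq_of_le_maxNe (hy : 0 < p y) (hle : p y ≤ maxNe p y) :
    hingeLoss p y = 1 - Real.log (p y / maxNe p y) := by
  have hlog : Real.log (p y / maxNe p y) ≤ 0 :=
    Real.log_nonpos (div_nonneg hy.le (hy.trans_le hle).le)
      ((div_le_one (hy.trans_le hle)).2 hle)
  exact max_eq_right (by linarith)

theorem hingeLoss_sub_hingeLoss_of_eq (hy : 0 < p y) (hqy : q y = p y)
    (hp : p y ≤ maxNe p y) (hq : p y ≤ maxNe q y) :
    hingeLoss p y - hingeLoss q y = Real.log (maxNe p y / maxNe q y) := by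
  have hmp : 0 < maxNe p y := hy.trans_le hp
  have hmq : 0 < maxNe q y := hy.trans_le hq
  rw [hingeLoss_eq_of_le_maxNe hy hp, hingeLoss_eq_of_le_maxNe (hqy ▸ hy) (hqy ▸ hq), hqy,
    Real.log_div hy.ne' hmp.ne', Real.log_div hy.ne' hmq.ne', Real.log_div hmp.ne' hmq.ne']
  ring

theorem hybridLoss_sub_hybridLoss_of_logLoss_eq (α : ℝ) (h : logLoss p y = logLoss q y) :
    hybridLoss α p y - hybridLoss α q y = (1 - α) * (hingeLoss p y - hingeLoss q y) := by
  unfold hybridLoss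
  rw [h]
  ring

end Losses

theorem neg_div_lt_log_div_add {a ε : ℝ} (ha : 0 < a) (hε : 0 < ε) :
    -ε / a < Real.log (a / (a + ε)) := by
  have hx : 0 < (a + ε) / a := by positivity
  have hx1 : (a + ε) / a ≠ 1 := by
    rw [ne_eq, div_eq_one_iff_eq ha.ne']
    linarith
  have hlt := Real.log_lt_sub_one_of_pos hx hx1
  rw [← inv_div (a + ε), Real.log_inv, neg_div]
  have : (a + ε) / a - 1 = ε / a := by field_simp; ring
  linarith

theorem perturbation_bound_other_labels_general {Y : Type*} [Fintype Y]
(p : Y → ℝ) (hp : IsPosDist p)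
    (t ystar : Y) (hpt : p t = p ystar)
    (hlt : ∀ y, y ≠ t → y ≠ ystar → p y < p t)
    (ε : ℝ) (hε0 : 0 < ε)
    (q : Y → ℝ) (hqstar : q ystar = p ystar + ε) (hqt : q t = p t - ε)
    (hq : ∀ y, y ≠ t → y ≠ ystar → q y = p y)
    (y : Y) (hyt : y ≠ t) (hystar : y ≠ ystar) :
    logLoss p y = logLoss q y ∧
    hingeLoss p y - hingeLoss q y = Real.log (p t / (p t + ε)) ∧
    -ε / p t < Real.log (p t / (p t + ε)) ∧
    ∀ α ∈ Set.Icc (0 : ℝ) 1,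
      -(ε * (1 - α)) / p t ≤ hybridLoss α p y - hybridLoss α q y ∧
      (α < 1 → -(ε * (1 - α)) / p t < hybridLoss α p y - hybridLoss α q y) := by
  have hqy : q y = p y := hq y hyt hystar
  have hple : ∀ y', p y' ≤ p t := fun y' => by
    by_cases h₁ : y' = t
    · rw [h₁]
    by_cases h₂ : y' = ystar
    · rw [h₂, hpt]
    exact (hlt y' h₁ h₂).le
  have hqle : ∀ y', q y' ≤ q ystar := fun y' => by
    rw [hqstar, ← hpt]
    by_cases h₁ : y' = t
    · rw [h₁, hqt]; linarith
    by_cases h₂ : y' = ystar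
    · rw [h₂, hqstar, hpt]
    rw [hq y' h₁ h₂]; linarith [hple y']
  have hmaxp : maxNe p y = p t := maxNe_eq_of_le hyt.symm fun y' _ => hple y'
  have hmaxq : maxNe q y = p t + ε := by
    rw [maxNe_eq_of_le hystar.symm fun y' _ => hqle y', hqstar, hpt]
  have hlog : logLoss p y = logLoss q y := by rw [logLoss, logLoss, hqy]
  have hhinge : hingeLoss p y - hingeLoss q y = Real.log (p t / (p t + ε)) := by
    rw [hingeLoss_sub_hingeLoss_of_eq (hp.1 y) hqy (hmaxp ▸ hple y) (by linarith [hple y]),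
      hmaxp, hmaxq]
  have hkey := neg_div_lt_log_div_add (hp.1 t) hε0
  refine ⟨hlog, hhinge, hkey, fun α ⟨_, hα1⟩ => ?_⟩
  rw [hybridLoss_sub_hybridLoss_of_logLoss_eq α hlog, hhinge,
    show -(ε * (1 - α)) / p t = (1 - α) * (-ε / p t) by ring]
  exact ⟨mul_le_mul_of_nonneg_left hkey.le (by linarith),
    fun hα => mul_lt_mul_of_pos_left hkey (by linarith)⟩

/-- Perturbation bound at labels other than t and y* (inequality (10)). -/
theorem perturbation_bound_other_labels {Y : Type*} [Fintype Y]
    (hcard : 1 < Fintype.card Y)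
(p : Y → ℝ) (hp : IsPosDist p)
    (t ystar : Y) (hne : t ≠ ystar) (hpt : p t = p ystar)
    (hlt : ∀ y, y ≠ t → y ≠ ystar → p y < p t)
    (ε : ℝ) (hε0 : 0 < ε) (hεpt : ε < p t)
    (hεlt : ∀ y, y ≠ t → y ≠ ystar → p y < p t - ε)
    (q : Y → ℝ) (hqstar : q ystar = p ystar + ε) (hqt : q t = p t - ε)
    (hq : ∀ y, y ≠ t → y ≠ ystar → q y = p y)
    (y : Y) (hyt : y ≠ t) (hystar : y ≠ ystar) :
    logLoss p y = logLoss q y ∧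
    hingeLoss p y - hingeLoss q y = Real.log (p t / (p t + ε)) ∧
    -ε / p t < Real.log (p t / (p t + ε)) ∧
    ∀ α ∈ Set.Icc (0 : ℝ) 1,
      -(ε * (1 - α)) / p t ≤ hybridLoss α p y - hybridLoss α q y ∧
      (α < 1 → -(ε * (1 - α)) / p t < hybridLoss α p y - hybridLoss α q y) :=
  perturbation_bound_other_labels_general p hp t ystar hpt hlt ε hε0 q hqstar hqt hq y hyt hystar
end

section
/- Perturbation bounds at y* for the two component losses (from the proof of Theorem 1): In the perturbation setup, ℓ_L(p,y*) − ℓ_L(q,y*) = log((p y* + ε)/(p y*)) > ε/(p y* + ε), and ℓ_H(p,y*) − ℓ_H(q,y*) > 2ε/(p y* + ε). -/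
open Real

/- Both bounds are instances of `(b - a) / b < log (b / a)` for `0 < a < b`, the strict form of
`log x ≤ x - 1` at `x = a / b`: with `a = p y*`, `b = p y* + ε` for the log loss, and with
`a = p y* - ε`, `b = p y* + ε` for the hinge loss, whose value drops from `1` (the tie `p t = p y*`)
to `max 0 (1 - log ((p y* + ε) / (p y* - ε)))`. -/

lemma sub_div_lt_log_div {a b : ℝ} (ha : 0 < a) (hab : a < b) : (b - a) / b < Real.log (b / a) := by
  have hb : 0 < b := ha.trans hab
  calc (b - a) / b = -(a / b - 1) := by field_simp; ring
    _ < -Real.log (a / b) :=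
      neg_lt_neg (Real.log_lt_sub_one_of_pos (by positivity) ((div_lt_one hb).2 hab).ne)
    _ = Real.log (b / a) := by rw [← Real.log_inv, inv_div]

lemma maxNe_eq_of_forall_le {Y : Type*} {p : Y → ℝ} {y t : Y} (ht : t ≠ y)
    (hle : ∀ y', y' ≠ y → p y' ≤ p t) : maxNe p y = p t :=
  IsGreatest.csSup_eq ⟨⟨t, ht, rfl⟩, by rintro _ ⟨y', hy', rfl⟩; exact hle y' hy'⟩

lemma logLoss_sub_logLoss {Y : Type*} {p q : Y → ℝ} {y : Y} (hp : 0 < p y) (hq : 0 < q y) :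
    logLoss p y - logLoss q y = Real.log (q y / p y) := by
  rw [logLoss, logLoss, Real.log_div hq.ne' hp.ne']
  ring

lemma hingeLoss_eq_one_of_maxNe_eq_self {Y : Type*} {p : Y → ℝ} {y : Y} (hp : p y ≠ 0)
    (h : maxNe p y = p y) : hingeLoss p y = 1 := by
  rw [hingeLoss, h, div_self hp, Real.log_one, sub_zero, max_eq_right zero_le_one]

theorem perturbation_bounds_at_ystar_general {Y : Type*}
    (p : Y → ℝ)
    (t ystar : Y) (hne : t ≠ ystar) (hpt : p t = p ystar)
    (ε : ℝ) (hε0 : 0 < ε) (hεpt : ε < p t)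
    (hεlt : ∀ y, y ≠ t → y ≠ ystar → p y < p t - ε)
    (q : Y → ℝ) (hqstar : q ystar = p ystar + ε) (hqt : q t = p t - ε)
    (hq : ∀ y, y ≠ t → y ≠ ystar → q y = p y) :
    (logLoss p ystar - logLoss q ystar = Real.log ((p ystar + ε) / p ystar) ∧
      ε / (p ystar + ε) < Real.log ((p ystar + ε) / p ystar)) ∧
    2 * ε / (p ystar + ε) < hingeLoss p ystar - hingeLoss q ystar := by
  rw [hpt] at hεpt hεlt hqt
  have hs : 0 < p ystar := hε0.trans hεpt
  have hmp : maxNe p ystar = p ystar := hpt ▸ maxNe_eq_of_forall_le hne fun y hy => by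
    rcases eq_or_ne y t with rfl | hyt
    · exact le_rfl
    · linarith [hεlt y hyt hy]
  have hmq : maxNe q ystar = q t := maxNe_eq_of_forall_le hne fun y hy => by
    rcases eq_or_ne y t with rfl | hyt
    · exact le_rfl
    · rw [hq y hyt hy, hqt]; exact (hεlt y hyt hy).le
  have hlog := sub_div_lt_log_div hs (lt_add_of_pos_right _ hε0)
  have hhinge : 2 * ε / (p ystar + ε) < Real.log ((p ystar + ε) / (p ystar - ε)) := by
    convert sub_div_lt_log_div (sub_pos.2 hεpt) (by linarith : p ystar - ε < p ystar + ε) using 2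
    ring
  have hlt_one : 2 * ε / (p ystar + ε) < 1 := (div_lt_one (by linarith)).2 (by linarith)
  refine ⟨⟨?_, by simpa using hlog⟩, ?_⟩
  · rw [logLoss_sub_logLoss hs (hqstar ▸ by linarith), hqstar]
  · rw [hingeLoss_eq_one_of_maxNe_eq_self hs.ne' hmp, hingeLoss, hmq, hqstar, hqt]
    linarith [max_lt (by linarith : (0 : ℝ) < 1 - 2 * ε / (p ystar + ε))
      (by linarith : 1 - Real.log ((p ystar + ε) / (p ystar - ε)) < 1 - 2 * ε / (p ystar + ε))]

/-- Perturbation bounds at y* for the two component losses. -/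
theorem perturbation_bounds_at_ystar {Y : Type*} [Fintype Y]
    (hcard : 1 < Fintype.card Y)
(p : Y → ℝ) (hp : IsPosDist p)
    (t ystar : Y) (hne : t ≠ ystar) (hpt : p t = p ystar)
    (hlt : ∀ y, y ≠ t → y ≠ ystar → p y < p t)
    (ε : ℝ) (hε0 : 0 < ε) (hεpt : ε < p t)
    (hεlt : ∀ y, y ≠ t → y ≠ ystar → p y < p t - ε)
    (q : Y → ℝ) (hqstar : q ystar = p ystar + ε) (hqt : q t = p t - ε)
    (hq : ∀ y, y ≠ t → y ≠ ystar → q y = p y) :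
    (logLoss p ystar - logLoss q ystar = Real.log ((p ystar + ε) / p ystar) ∧
      ε / (p ystar + ε) < Real.log ((p ystar + ε) / p ystar)) ∧
    2 * ε / (p ystar + ε) < hingeLoss p ystar - hingeLoss q ystar :=
  perturbation_bounds_at_ystar_general p t ystar hne hpt ε hε0 hεpt hεlt q hqstar hqt hq
end
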